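/- arXiv:2402.12056 — 3 statements merged into one kernel-verified Lean document; each statement's English description precedes it below -/
import Mathlib

section
/- Let E be a normed vector space, λ > 0, α ∈ (0,1], and Y : [0,T] → E. Define the weighted norms (|Y|)_λ := sup_{t ∈ [0,T]} |Y_t| e^{−t/λ} and (|δY|)_{α;λ} := sup_{0 ≤ s < t ≤ T, |t−s| ≤ λ} |Y_t − Y_s| / (e^{t/λ} |t−s|^α). Then (|Y|)_λ ≤ |Y_0| + e² λ^α (|δY|)_{α;λ}. -/
/-!
Telescope `Y t - Y 0` backwards along `t, t - λ, t - 2λ, …` down to `0`. An increment over a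
step of length at most `λ` ending at `u` is at most `λ^α C e^{u/λ}`, and
`e^{(t - kλ)/λ} = e^{-k} e^{t/λ}`, so the increments form a geometric series summing to at most
`(1 - e⁻¹)⁻¹ λ^α C e^{t/λ}`, and `(1 - e⁻¹)⁻¹ ≤ e²`.
-/

open Real

lemma one_sub_exp_neg_one_pos : 0 < 1 - exp (-1) := by
  linarith [exp_lt_one_iff.mpr (neg_one_lt_zero (R := ℝ))]

lemma one_le_inv_one_sub_exp_neg_one : 1 ≤ (1 - exp (-1))⁻¹ :=
  one_le_inv_iff₀.mpr ⟨one_sub_exp_neg_one_pos, by linarith [exp_pos (-1)]⟩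

lemma inv_one_sub_exp_neg_one_le_exp_two : (1 - exp (-1))⁻¹ ≤ exp 2 := by
  have he : 2 ≤ exp 1 := by linarith [add_one_le_exp (1 : ℝ)]
  have h2 : exp 2 = exp 1 * exp 1 := by rw [← exp_add]; norm_num
  have hsub : 1 - exp (-1) = (exp 1 - 1) / exp 1 := by
    rw [exp_neg, sub_div, div_self (exp_pos 1).ne', one_div]
  rw [hsub, inv_div, div_le_iff₀ (by linarith), h2]
  nlinarith

section IncrementBound

variable {E : Type*} [NormedAddCommGroup E] {Y : ℝ → E} {T lam K : ℝ}

theorem norm_sub_zero_le_of_norm_sub_le_exp (hlam : 0 < lam) (hK : 0 ≤ K)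
    (hinc : ∀ s t, 0 ≤ s → s < t → t ≤ T → t - s ≤ lam → ‖Y t - Y s‖ ≤ K * exp (t / lam))
    (n : ℕ) : ∀ t, 0 < t → t ≤ T → t ≤ n * lam →
      ‖Y t - Y 0‖ ≤ (1 - exp (-1))⁻¹ * K * exp (t / lam) := by
  induction n with
  | zero =>
    intro t ht _ htn
    simp only [CharP.cast_eq_zero, zero_mul] at htn
    linarith
  | succ n ih =>
    intro t ht htT htn
    by_cases hshort : t ≤ lam
    · calc ‖Y t - Y 0‖ ≤ K * exp (t / lam) := hinc 0 t le_rfl ht htT (by linarith)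
        _ = 1 * K * exp (t / lam) := by ring
        _ ≤ (1 - exp (-1))⁻¹ * K * exp (t / lam) := by
          gcongr
          exact one_le_inv_one_sub_exp_neg_one
    · replace hshort := not_le.mp hshort
      have hprev := ih (t - lam) (by linarith) (by linarith) (by push_cast at htn; linarith)
      have hexp : exp ((t - lam) / lam) = exp (-1) * exp (t / lam) := by
        rw [← exp_add, sub_div, div_self hlam.ne']
        ring_nf
      calc ‖Y t - Y 0‖ ≤ ‖Y t - Y (t - lam)‖ + ‖Y (t - lam) - Y 0‖ :=
            norm_sub_le_norm_sub_add_norm_sub _ _ _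
        _ ≤ K * exp (t / lam) + (1 - exp (-1))⁻¹ * K * exp ((t - lam) / lam) :=
          add_le_add (hinc _ t (by linarith) (by linarith) htT (by linarith)) hprev
        _ = (1 - exp (-1))⁻¹ * K * exp (t / lam) := by
          have hc : 1 - exp (-1) ≠ 0 := one_sub_exp_neg_one_pos.ne'
          rw [hexp]
          field_simp
          ring

theorem norm_mul_exp_neg_le_of_norm_sub_le_exp (hlam : 0 < lam) (hK : 0 ≤ K)
    (hinc : ∀ s t, 0 ≤ s → s < t → t ≤ T → t - s ≤ lam → ‖Y t - Y s‖ ≤ K * exp (t / lam))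
    {t : ℝ} (ht : 0 ≤ t) (htT : t ≤ T) :
    ‖Y t‖ * exp (-(t / lam)) ≤ ‖Y 0‖ + (1 - exp (-1))⁻¹ * K := by
  have hcK : 0 ≤ (1 - exp (-1))⁻¹ * K :=
    mul_nonneg (inv_nonneg.mpr one_sub_exp_neg_one_pos.le) hK
  rcases ht.eq_or_lt with rfl | ht
  · simpa using hcK
  obtain ⟨n, hn⟩ := exists_nat_ge (t / lam)
  have hdiff := norm_sub_zero_le_of_norm_sub_le_exp hlam hK hinc n t ht htT
    ((div_le_iff₀ hlam).mp hn)
  have hdecay : exp (-(t / lam)) ≤ 1 := exp_le_one_iff.mpr (by linarith [div_pos ht hlam])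
  calc ‖Y t‖ * exp (-(t / lam))
      ≤ (‖Y 0‖ + (1 - exp (-1))⁻¹ * K * exp (t / lam)) * exp (-(t / lam)) := by
        gcongr
        linarith [norm_le_norm_add_norm_sub' (Y t) (Y 0)]
    _ = ‖Y 0‖ * exp (-(t / lam)) + (1 - exp (-1))⁻¹ * K := by
        rw [add_mul, mul_assoc _ (exp _), ← exp_add, add_neg_cancel, exp_zero, mul_one]
    _ ≤ ‖Y 0‖ + (1 - exp (-1))⁻¹ * K := by
        gcongr
        exact mul_le_of_le_one_right (norm_nonneg _) hdecay

end IncrementBound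

theorem stmt_2_general {E : Type*} [NormedAddCommGroup E]
    (T lam α C : ℝ) (hlam : 0 < lam) (hα : 0 < α) (hC : 0 ≤ C)
    (Y : ℝ → E)
    (hHolder : ∀ s t, 0 ≤ s → s < t → t ≤ T → t - s ≤ lam →
      ‖Y t - Y s‖ ≤ C * Real.exp (t / lam) * (t - s) ^ α) :
    ∀ t, 0 ≤ t → t ≤ T →
      ‖Y t‖ * Real.exp (-(t / lam)) ≤ ‖Y 0‖ + Real.exp 2 * lam ^ α * C := by
  intro t ht htT
  have hK : 0 ≤ lam ^ α * C := mul_nonneg (rpow_nonneg hlam.le α) hC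
  have hinc : ∀ s t, 0 ≤ s → s < t → t ≤ T → t - s ≤ lam →
      ‖Y t - Y s‖ ≤ lam ^ α * C * exp (t / lam) := fun s t hs hst htT hstep =>
    calc ‖Y t - Y s‖ ≤ C * exp (t / lam) * (t - s) ^ α := hHolder s t hs hst htT hstep
      _ ≤ C * exp (t / lam) * lam ^ α := by gcongr
      _ = lam ^ α * C * exp (t / lam) := by ring
  calc ‖Y t‖ * exp (-(t / lam)) ≤ ‖Y 0‖ + (1 - exp (-1))⁻¹ * (lam ^ α * C) :=
        norm_mul_exp_neg_le_of_norm_sub_le_exp hlam hK hinc ht htT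
    _ ≤ ‖Y 0‖ + exp 2 * (lam ^ α * C) := by
        gcongr
        exact inv_one_sub_exp_neg_one_le_exp_two
    _ = ‖Y 0‖ + exp 2 * lam ^ α * C := by ring

/-- Comparison of weighted norms: if `‖Y_t - Y_s‖ ≤ C e^{t/λ} (t-s)^α` for all
`0 ≤ s < t ≤ T` with `t - s ≤ λ`, then the weighted supremum norm of `Y` is
bounded by `‖Y_0‖ + e² λ^α C`. -/
theorem stmt_2 {E : Type*} [NormedAddCommGroup E]
    (T lam α C : ℝ) (hlam : 0 < lam) (hα : 0 < α) (hα1 : α ≤ 1) (hC : 0 ≤ C)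
    (Y : ℝ → E)
    (hHolder : ∀ s t, 0 ≤ s → s < t → t ≤ T → t - s ≤ lam →
      ‖Y t - Y s‖ ≤ C * Real.exp (t / lam) * (t - s) ^ α) :
    ∀ t, 0 ≤ t → t ≤ T →
      ‖Y t‖ * Real.exp (-(t / lam)) ≤ ‖Y 0‖ + Real.exp 2 * lam ^ α * C :=
  stmt_2_general T lam α C hlam hα hC Y hHolder
end

section
/- Let E be a normed vector space and A : Δ_{[0,T]} → E a two-parameter function that is additive, i.e. A_{s,t} = A_{s,u} + A_{u,t} for all s ≤ u ≤ t. Fix λ > 0 and γ ∈ (0,1], and suppose (|A|)_{γ;λ} := sup_{s < t, |t−s| ≤ λ} |A_{s,t}|/(e^{t/λ}|t−s|^γ) is finite. Then for all s < t in [0,T], |A_{s,t}| ≤ e² e^{T/λ} (|A|)_{γ;λ} |t−s|^γ, i.e. the full γ-Hölder seminorm of A is bounded by e² e^{T/λ} (|A|)_{γ;λ}. -/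
/-- For an additive two-parameter function `A` (i.e. `A_{s,t} = A_{s,u} + A_{u,t}`), the
full `γ`-Hölder seminorm is controlled by the weighted Hölder seminorm:
`‖A_{s,t}‖ ≤ e² e^{T/λ} C (t-s)^γ` whenever `‖A_{s,t}‖ ≤ C e^{t/λ}(t-s)^γ` for
pairs with `t - s ≤ λ`. -/
theorem stmt_5 {E : Type*} [NormedAddCommGroup E]
    (T lam γ C : ℝ) (hlam : 0 < lam) (hγ : 0 < γ) (hγ1 : γ ≤ 1) (hC : 0 ≤ C)
    (A : ℝ → ℝ → E)
    (hadd : ∀ s u t, 0 ≤ s → s ≤ u → u ≤ t → t ≤ T → A s t = A s u + A u t)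
    (hweighted : ∀ s t, 0 ≤ s → s < t → t ≤ T → t - s ≤ lam →
      ‖A s t‖ ≤ C * Real.exp (t / lam) * (t - s) ^ γ) :
    ∀ s t, 0 ≤ s → s < t → t ≤ T →
      ‖A s t‖ ≤ Real.exp 2 * Real.exp (T / lam) * C * (t - s) ^ γ := by
  have he2 : (2:ℝ) ≤ Real.exp 1 := by
    have := Real.add_one_le_exp (1:ℝ); linarith
  have he3 : Real.exp 1 < 3 := by
    have := Real.exp_one_lt_d9; linarith
  have hne : Real.exp 1 - 1 ≠ 0 := by linarith
  set K : ℝ := Real.exp 1 / (Real.exp 1 - 1) with hK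
  have heK : K * (Real.exp 1 - 1) = Real.exp 1 := by
    rw [hK, div_mul_cancel₀ _ hne]
  have hK1 : 1 ≤ K := by
    rw [hK, le_div_iff₀ (by linarith)]; linarith
  have hKe2 : K ≤ Real.exp 2 := by
    have h2 : Real.exp 2 = Real.exp 1 * Real.exp 1 := by
      rw [← Real.exp_add]; norm_num
    rw [hK, div_le_iff₀ (by linarith), h2]
    nlinarith
  -- main induction
  have key : ∀ n : ℕ, ∀ s t, 0 ≤ s → s < t → t ≤ T → t - s ≤ (n + 1) * lam →
      ‖A s t‖ ≤ K * C * Real.exp (t / lam) * (t - s) ^ γ := by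
    intro n
    induction n with
    | zero =>
      intro s t hs hst htT hle
      have hb := hweighted s t hs hst htT (by push_cast at hle; linarith)
      have hnn : 0 ≤ C * Real.exp (t / lam) * (t - s) ^ γ :=
        mul_nonneg (mul_nonneg hC (Real.exp_pos _).le)
          (Real.rpow_nonneg (by linarith) _)
      nlinarith
    | succ n ih =>
      intro s t hs hst htT hle
      by_cases hcase : t - s ≤ lam
      · have hb := hweighted s t hs hst htT hcase
        have hnn : 0 ≤ C * Real.exp (t / lam) * (t - s) ^ γ :=
          mul_nonneg (mul_nonneg hC (Real.exp_pos _).le)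
            (Real.rpow_nonneg (by linarith) _)
        nlinarith
      · push_neg at hcase
        set u : ℝ := t - lam with hu
        have hsu : s < u := by simp [hu]; linarith
        have hut : u < t := by simp [hu]; linarith
        have hsplit : A s t = A s u + A u t := hadd s u t hs hsu.le hut.le htT
        have h1 : ‖A s u‖ ≤ K * C * Real.exp (u / lam) * (u - s) ^ γ := by
          apply ih s u hs hsu (by linarith)
          push_cast at hle ⊢
          simp only [hu]; linarith
        have h2 : ‖A u t‖ ≤ C * Real.exp (t / lam) * (t - u) ^ γ :=
          hweighted u t (by linarith) hut htT (by simp [hu])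
        have hexpu : Real.exp (u / lam) = Real.exp (t / lam) / Real.exp 1 := by
          rw [hu, ← Real.exp_sub]
          congr 1
          field_simp
        have hpow1 : (u - s) ^ γ ≤ (t - s) ^ γ :=
          Real.rpow_le_rpow (by linarith) (by linarith) hγ.le
        have hpow2 : (t - u) ^ γ ≤ (t - s) ^ γ :=
          Real.rpow_le_rpow (by simp [hu]; linarith) (by simp [hu]; linarith) hγ.le
        have hb1 : K * C * Real.exp (u / lam) * (u - s) ^ γ ≤
            (K / Real.exp 1) * C * Real.exp (t / lam) * (t - s) ^ γ := by
          rw [hexpu]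
          have hc : K * C * (Real.exp (t / lam) / Real.exp 1) =
              (K / Real.exp 1) * C * Real.exp (t / lam) := by ring
          rw [hc]
          apply mul_le_mul_of_nonneg_left hpow1
          have hKpos : 0 < K := by linarith
          positivity
        have hb2 : C * Real.exp (t / lam) * (t - u) ^ γ ≤
            C * Real.exp (t / lam) * (t - s) ^ γ := by
          apply mul_le_mul_of_nonneg_left hpow2
          positivity
        have hKsum : K / Real.exp 1 + 1 = K := by
          rw [div_add' _ _ _ (by positivity)]
          rw [div_eq_iff (by positivity)]
          nlinarith [heK]
        calc ‖A s t‖ ≤ ‖A s u‖ + ‖A u t‖ := by rw [hsplit]; exact norm_add_le _ _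
          _ ≤ (K / Real.exp 1) * C * Real.exp (t / lam) * (t - s) ^ γ +
              C * Real.exp (t / lam) * (t - s) ^ γ :=
              add_le_add (le_trans h1 hb1) (le_trans h2 hb2)
          _ = (K / Real.exp 1 + 1) * C * Real.exp (t / lam) * (t - s) ^ γ := by ring
          _ = K * C * Real.exp (t / lam) * (t - s) ^ γ := by rw [hKsum]
  -- conclude
  intro s t hs hst htT
  obtain ⟨n, hn⟩ := exists_nat_ge ((t - s) / lam)
  have hle : t - s ≤ (n + 1) * lam := by
    rw [div_le_iff₀ hlam] at hn
    nlinarith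
  have h := key n s t hs hst htT hle
  have he : Real.exp (t / lam) ≤ Real.exp (T / lam) :=
    Real.exp_le_exp.mpr (by gcongr)
  have hpnn : (0:ℝ) ≤ (t - s) ^ γ := Real.rpow_nonneg (by linarith) _
  have hmul : K * Real.exp (t / lam) ≤ Real.exp 2 * Real.exp (T / lam) :=
    mul_le_mul hKe2 he (Real.exp_pos _).le (by positivity)
  calc ‖A s t‖ ≤ K * C * Real.exp (t / lam) * (t - s) ^ γ := h
    _ = (K * Real.exp (t / lam)) * (C * (t - s) ^ γ) := by ring
    _ ≤ (Real.exp 2 * Real.exp (T / lam)) * (C * (t - s) ^ γ) :=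
        mul_le_mul_of_nonneg_right hmul (mul_nonneg hC hpnn)
    _ = Real.exp 2 * Real.exp (T / lam) * C * (t - s) ^ γ := by ring
end

section
/- Let Z : [0,T] → ℝⁿ, α ∈ (1/3, 1/2], and suppose Z is θ-Hölder rough on scale ε₀ with modulus L > 0 for some θ ∈ (0, 2α). Let W be a finite-dimensional normed space and X : [0,T] → W, X' : [0,T] → L(ℝⁿ, W). Then for every ε ∈ (0, ε₀]: L · ε^θ · sup_{t ∈ [0,T]} ‖X'_t‖_{op} ≤ sup_{(s,t): |t−s| ≤ ε} ‖X'_s (Z_t − Z_s)‖_W. -/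
open scoped RealInnerProductSpace

/-- The deterministic key roughness estimate: for a `θ`-Hölder rough path `Z` and any
Gubinelli-derivative candidate `X'`, one has
`L ε^θ sup_t ‖X'_t‖ ≤ sup_{|t-s| ≤ ε} ‖X'_s (Z_t - Z_s)‖` for `ε ∈ (0, ε₀]`
(formulated with an arbitrary upper bound `B` of the right-hand side). -/
theorem stmt_11 {n : ℕ} {W : Type*} [NormedAddCommGroup W] [NormedSpace ℝ W]
    [FiniteDimensional ℝ W]
    (T α θ ε₀ L : ℝ) (hα1 : 1 / 3 < α) (hα2 : α ≤ 1 / 2) (hθ : 0 < θ)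
    (hθα : θ < 2 * α) (hε₀ : 0 < ε₀) (hL : 0 < L)
    (Z : ℝ → EuclideanSpace ℝ (Fin n))
    (hrough : ∀ v : EuclideanSpace ℝ (Fin n), ∀ s ∈ Set.Icc (0 : ℝ) T,
      ∀ ε : ℝ, 0 < ε → ε ≤ ε₀ →
        ∃ t ∈ Set.Icc (0 : ℝ) T, |t - s| < ε ∧ L * ε ^ θ * ‖v‖ ≤ |⟪v, Z t - Z s⟫|)
    (X' : ℝ → EuclideanSpace ℝ (Fin n) →L[ℝ] W) :
    ∀ ε : ℝ, 0 < ε → ε ≤ ε₀ → ∀ B : ℝ,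
      (∀ s ∈ Set.Icc (0 : ℝ) T, ∀ t ∈ Set.Icc (0 : ℝ) T, |t - s| ≤ ε →
        ‖X' s (Z t - Z s)‖ ≤ B) →
      ∀ u ∈ Set.Icc (0 : ℝ) T, L * ε ^ θ * ‖X' u‖ ≤ B := by
  intro ε hε hεε₀ B hB u hu
  have hLε : 0 < L * ε ^ θ := mul_pos hL (Real.rpow_pos_of_pos hε θ)
  -- B is nonnegative
  have hB0 : 0 ≤ B := by
    have := hB u hu u hu (by simpa using hε.le)
    simpa using le_trans (norm_nonneg _) this
  -- key: for every dual functional g, the Riesz representative of g ∘ X' u is small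
  have key : ∀ g : StrongDual ℝ W,
      ‖g.comp (X' u)‖ ≤ B / (L * ε ^ θ) * ‖g‖ := by
    intro g
    set v : EuclideanSpace ℝ (Fin n) :=
      (InnerProductSpace.toDual ℝ (EuclideanSpace ℝ (Fin n))).symm (g.comp (X' u)) with hv
    have hvnorm : ‖v‖ = ‖g.comp (X' u)‖ := by
      rw [hv]; exact LinearIsometryEquiv.norm_map _ _
    have hvapp : ∀ x, ⟪v, x⟫ = g (X' u x) := by
      intro x
      have := InnerProductSpace.toDual_symm_apply (𝕜 := ℝ)
        (E := EuclideanSpace ℝ (Fin n)) (x := x) (y := g.comp (X' u))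
      simpa [hv] using this
    obtain ⟨t, ht, hts, hineq⟩ := hrough v u hu ε hε hεε₀
    have h1 : |⟪v, Z t - Z u⟫| = |g (X' u (Z t - Z u))| := by rw [hvapp]
    have h2 : |g (X' u (Z t - Z u))| ≤ ‖g‖ * B := by
      calc |g (X' u (Z t - Z u))| ≤ ‖g‖ * ‖X' u (Z t - Z u)‖ := g.le_opNorm _
        _ ≤ ‖g‖ * B := by
          exact mul_le_mul_of_nonneg_left (hB u hu t ht hts.le) (norm_nonneg g)
    have : L * ε ^ θ * ‖v‖ ≤ ‖g‖ * B := le_trans hineq (h1 ▸ h2)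
    rw [← hvnorm]
    rw [div_mul_eq_mul_div, le_div_iff₀ hLε]
    linarith [this]
  -- deduce the operator norm bound via the dual characterization
  have hnorm : ‖X' u‖ ≤ B / (L * ε ^ θ) := by
    apply ContinuousLinearMap.opNorm_le_bound _ (by positivity)
    intro x
    apply NormedSpace.norm_le_dual_bound ℝ _ (by positivity)
    intro g
    have h1 : |g (X' u x)| = |⟪(InnerProductSpace.toDual ℝ
        (EuclideanSpace ℝ (Fin n))).symm (g.comp (X' u)), x⟫| := by
      rw [InnerProductSpace.toDual_symm_apply]; rfl
    calc |g (X' u x)| ≤ ‖g.comp (X' u)‖ * ‖x‖ := by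
          rw [h1]
          calc |⟪_, x⟫| ≤ ‖(InnerProductSpace.toDual ℝ
              (EuclideanSpace ℝ (Fin n))).symm (g.comp (X' u))‖ * ‖x‖ :=
            abs_real_inner_le_norm _ _
          _ = ‖g.comp (X' u)‖ * ‖x‖ := by rw [LinearIsometryEquiv.norm_map]
      _ ≤ B / (L * ε ^ θ) * ‖g‖ * ‖x‖ := by
          exact mul_le_mul_of_nonneg_right (key g) (norm_nonneg x)
      _ = B / (L * ε ^ θ) * ‖x‖ * ‖g‖ := by ring
  calc L * ε ^ θ * ‖X' u‖ ≤ L * ε ^ θ * (B / (L * ε ^ θ)) :=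
        mul_le_mul_of_nonneg_left hnorm hLε.le
    _ = B := by field_simp
end
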